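/- arXiv:2212.11528 — 3 statements merged into one kernel-verified Lean document; each statement's English description precedes it below -/
import Mathlib

section
/- Let u be a nonnegative differentiable function on [0,∞) satisfying u'(t) ≤ c(t)u(t) + a(t)u(t)^α, where 0 ≤ α < 1 and c, a are continuous nonnegative functions. Then u(t) ≤ [u(0)^{1-α}·exp((1-α)∫₀ᵗ c(s)ds) + ∫₀ᵗ (1-α)a(s)·exp((1-α)∫ₛᵗ c(r)dr) ds]^{1/(1-α)}. -/
/-!
With `β = 1 - α`, the substitution `w = u ^ β` turns the Bernoulli inequality into the linear one
`w' ≤ β (c w + a)`, whose solutions are dominated by Duhamel's formula. Since `u ^ β` need not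
be differentiable where `u` vanishes, we compare `u` directly with `W ^ (1 / β) · exp (ε t)`,
where `W` solves the linear equation exactly with initial value `u 0 ^ β + ε`: this is a strict
supersolution of the Bernoulli inequality, so it stays above `u`, and we let `ε → 0`.
-/

open MeasureTheory intervalIntegral

open Real Set

theorem ContinuousOn.exists_continuous_eqOn_Ici {X Y : Type*} [LinearOrder X]
    [TopologicalSpace X] [OrderClosedTopology X] [TopologicalSpace Y] {f : X → Y} {a : X}
    (hf : ContinuousOn f (Ici a)) : ∃ g : X → Y, Continuous g ∧ EqOn f g (Ici a) :=
  ⟨fun x => f (max a x), hf.comp_continuous (continuous_const.max continuous_id) (le_max_left a),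
    fun x hx => by simp only [max_eq_right (mem_Ici.1 hx)]⟩

theorem le_of_strict_supersolution {f f' F : ℝ → ℝ} {φ : ℝ → ℝ → ℝ} {a b : ℝ} (hab : a ≤ b)
    (hf : ∀ t ∈ Icc a b, HasDerivAt f (f' t) t) (hf' : ∀ t ∈ Ico a b, f' t ≤ φ t (f t))
    (hF : ∀ t ∈ Icc a b, ∃ F', HasDerivAt F F' t ∧ φ t (F t) < F') (ha : f a ≤ F a) :
    f b ≤ F b := by
  have hFderiv : ∀ t ∈ Icc a b, HasDerivAt F (deriv F t) t := fun t ht =>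
    let ⟨_, hF', _⟩ := hF t ht; hF'.differentiableAt.hasDerivAt
  refine image_le_of_deriv_right_lt_deriv_boundary'
    (fun t ht => (hf t ht).continuousAt.continuousWithinAt)
    (fun t ht => (hf t (Ico_subset_Icc_self ht)).hasDerivWithinAt) ha
    (fun t ht => (hFderiv t ht).continuousAt.continuousWithinAt)
    (fun t ht => (hFderiv t (Ico_subset_Icc_self ht)).hasDerivWithinAt) ?_
    (right_mem_Icc.2 hab)
  intro t ht hft
  obtain ⟨F', hF', hlt⟩ := hF t (Ico_subset_Icc_self ht)
  rw [hF'.deriv]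
  exact (hf' t ht).trans_lt (hft ▸ hlt)

/-- Duhamel's formula for the solution of `w' = β (c w + a)`, `w 0 = K`. -/
noncomputable def duhamel (β : ℝ) (c a : ℝ → ℝ) (K t : ℝ) : ℝ :=
  K * exp (β * ∫ s in (0:ℝ)..t, c s) + ∫ s in (0:ℝ)..t, β * a s * exp (β * ∫ r in s..t, c r)

section Duhamel

variable {β : ℝ} {c a : ℝ → ℝ} {K t : ℝ}

theorem duhamel_congr {c' a' : ℝ → ℝ} (ht : 0 ≤ t) (hc : EqOn c c' (Icc 0 t))
    (ha : EqOn a a' (Icc 0 t)) : duhamel β c a K t = duhamel β c' a' K t := by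
  have hsub : ∀ s ∈ uIcc 0 t, uIcc s t ⊆ Icc 0 t := fun s hs => by
    rw [uIcc_of_le ht] at hs
    rw [uIcc_of_le hs.2]
    exact Icc_subset_Icc_left hs.1
  unfold duhamel
  rw [integral_congr (hc.mono (hsub 0 left_mem_uIcc))]
  congr 1
  refine integral_congr fun s hs => ?_
  rw [ha (uIcc_of_le ht ▸ hs), integral_congr (hc.mono (hsub s hs))]

theorem duhamel_pos (hK : 0 < K) (hβ : 0 ≤ β) (ht : 0 ≤ t) (ha : ∀ s ∈ Icc 0 t, 0 ≤ a s) :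
    0 < duhamel β c a K t :=
  add_pos_of_pos_of_nonneg (by positivity) <| integral_nonneg ht fun s hs => by
    have := ha s hs
    positivity

theorem continuous_duhamel_initial : Continuous fun K => duhamel β c a K t := by
  unfold duhamel
  fun_prop

theorem duhamel_eq_exp_mul (hc : Continuous c) :
    duhamel β c a K t = exp (β * ∫ s in (0:ℝ)..t, c s) *
      (K + ∫ s in (0:ℝ)..t, β * a s * exp (-(β * ∫ r in (0:ℝ)..s, c r))) := by
  have hsplit : ∀ s, exp (β * ∫ r in s..t, c r) =
      exp (β * ∫ r in (0:ℝ)..t, c r) * exp (-(β * ∫ r in (0:ℝ)..s, c r)) := fun s => by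
    rw [← integral_interval_sub_left (hc.intervalIntegrable _ _) (hc.intervalIntegrable _ _),
      ← exp_add]
    ring_nf
  rw [duhamel, mul_add, mul_comm K,
    ← intervalIntegral.integral_const_mul (exp (β * ∫ s in (0:ℝ)..t, c s))]
  congr 1
  refine integral_congr fun s _ => ?_
  rw [hsplit s]
  ring

theorem hasDerivAt_duhamel (hc : Continuous c) (ha : Continuous a) :
    HasDerivAt (duhamel β c a K) (β * (c t * duhamel β c a K t + a t)) t := by
  have hC : ∀ t, HasDerivAt (fun t => ∫ s in (0:ℝ)..t, c s) (c t) t := fun t =>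
    integral_hasDerivAt_right (hc.intervalIntegrable _ _) (hc.stronglyMeasurableAtFilter _ _)
      hc.continuousAt
  have hg : Continuous fun s => β * a s * exp (-(β * ∫ r in (0:ℝ)..s, c r)) := by
    have : Continuous fun s => ∫ r in (0:ℝ)..s, c r :=
      continuous_iff_continuousAt.2 fun s => (hC s).continuousAt
    fun_prop
  have hG := integral_hasDerivAt_right (hg.intervalIntegrable 0 t)
    (hg.stronglyMeasurableAtFilter _ _) hg.continuousAt
  have hexp : exp (β * ∫ s in (0:ℝ)..t, c s) * exp (-(β * ∫ r in (0:ℝ)..t, c r)) = 1 := by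
    rw [← exp_add, add_neg_cancel, exp_zero]
  rw [show duhamel β c a K = _ from funext fun _ => duhamel_eq_exp_mul hc]
  refine (((hC t).const_mul β).exp.fun_mul (hG.const_add K)).congr_deriv ?_
  linear_combination (β * a t) * hexp

end Duhamel

/-- Pointwise form of the supersolution property of `w ^ (1 / (1 - α)) * e`, for `w` solving
`w' = (1 - α) (c w + a)` and `e ≥ 1`. -/
theorem bernoulli_rhs_le {α c a w e : ℝ} (hα : α < 1) (ha : 0 ≤ a) (hw : 0 < w) (he : 1 ≤ e) :
    c * (w ^ (1 / (1 - α)) * e) + a * (w ^ (1 / (1 - α)) * e) ^ α ≤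
      (1 - α) * (c * w + a) * (1 / (1 - α)) * w ^ (1 / (1 - α) - 1) * e := by
  set p := 1 / (1 - α)
  have hβ : (1 - α) * p = 1 := mul_one_div_cancel (sub_pos.2 hα).ne'
  have hpα : p * α = p - 1 := by linear_combination (-1 : ℝ) * hβ
  have hpow : (w ^ p * e) ^ α = w ^ (p - 1) * e ^ α := by
    rw [mul_rpow (by positivity) (by positivity), ← rpow_mul hw.le, hpα]
  have he_α : e ^ α ≤ e := by
    simpa using rpow_le_rpow_of_exponent_le he hα.le
  have hw_p : w ^ (p - 1) * w = w ^ p := by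
    rw [rpow_sub_one hw.ne', div_mul_cancel₀ _ hw.ne']
  rw [hpow]
  calc c * (w ^ p * e) + a * (w ^ (p - 1) * e ^ α)
      ≤ c * (w ^ p * e) + a * (w ^ (p - 1) * e) := by gcongr
    _ = ((1 - α) * p) * (c * (w ^ (p - 1) * w) + a * w ^ (p - 1)) * e := by
      rw [hβ, hw_p]; ring
    _ = _ := by ring

noncomputable def barrier (α : ℝ) (c a : ℝ → ℝ) (K ε t : ℝ) : ℝ :=
  duhamel (1 - α) c a K t ^ (1 / (1 - α)) * exp (ε * t)

theorem barrier_zero {α : ℝ} {c a : ℝ → ℝ} {K ε : ℝ} :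
    barrier α c a K ε 0 = K ^ (1 / (1 - α)) := by
  simp [barrier, duhamel]

theorem barrier_strictSupersolution {α ε t : ℝ} {c a : ℝ → ℝ} {K : ℝ} (hα : α < 1) (hε : 0 < ε)
    (hK : 0 < K) (ht : 0 ≤ t) (hc : Continuous c) (ha : Continuous a)
    (ha₀ : ∀ s ∈ Icc 0 t, 0 ≤ a s) :
    ∃ F', HasDerivAt (barrier α c a K ε) F' t ∧
      c t * barrier α c a K ε t + a t * barrier α c a K ε t ^ α < F' := by
  have hW := duhamel_pos (c := c) hK (sub_pos.2 hα).le ht ha₀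
  have hE : HasDerivAt (fun t => exp (ε * t)) (exp (ε * t) * ε) t := by
    simpa using ((hasDerivAt_id t).const_mul ε).exp
  refine ⟨_, ((hasDerivAt_duhamel hc ha).rpow_const (Or.inl hW.ne')).mul hE, ?_⟩
  have hrhs := bernoulli_rhs_le (c := c t) hα (ha₀ t ⟨ht, le_rfl⟩) hW
    (one_le_exp (mul_nonneg hε.le ht))
  have : 0 < duhamel (1 - α) c a K t ^ (1 / (1 - α)) * (exp (ε * t) * ε) := by positivity
  simp only [barrier]
  linarith

theorem le_duhamel_rpow_of_bernoulli {u u' c a : ℝ → ℝ} {α T : ℝ} (hα : α < 1) (hT : 0 ≤ T)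
    (hc : Continuous c) (ha : Continuous a) (ha₀ : ∀ t ∈ Icc 0 T, 0 ≤ a t) (hu₀ : 0 ≤ u 0)
    (hu : ∀ t ∈ Icc 0 T, HasDerivAt u (u' t) t)
    (h : ∀ t ∈ Ico 0 T, u' t ≤ c t * u t + a t * u t ^ α) :
    u T ≤ duhamel (1 - α) c a (u 0 ^ (1 - α)) T ^ (1 / (1 - α)) := by
  have hu0 : u 0 = (u 0 ^ (1 - α)) ^ (1 / (1 - α)) := by
    rw [← rpow_mul hu₀, mul_one_div_cancel (sub_pos.2 hα).ne', rpow_one]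
  have hbound : ∀ ε > 0, u T ≤ barrier α c a (u 0 ^ (1 - α) + ε) ε T := fun ε hε => by
    refine le_of_strict_supersolution (φ := fun t x => c t * x + a t * x ^ α) hT hu h
      (fun t ht => barrier_strictSupersolution hα hε (by positivity) ht.1 hc ha
        fun s hs => ha₀ s ⟨hs.1, hs.2.trans ht.2⟩) ?_
    rw [barrier_zero]
    conv_lhs => rw [hu0]
    gcongr
    linarith
  have hcont : Continuous fun ε => barrier α c a (u 0 ^ (1 - α) + ε) ε T :=
    ((continuous_duhamel_initial.comp (continuous_const.add continuous_id)).rpow_const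
      fun _ => Or.inr (one_div_pos.2 (sub_pos.2 hα)).le).mul (by fun_prop)
  simpa [barrier] using ge_of_tendsto (hcont.tendsto 0 |>.mono_left nhdsWithin_le_nhds)
    (eventually_nhdsWithin_of_forall (s := Ioi 0) hbound)

theorem stmt_2_general (u u' c a : ℝ → ℝ) (α : ℝ) (hα1 : α < 1)
    (hu_nonneg : ∀ t ≥ (0:ℝ), 0 ≤ u t)
    (hderiv : ∀ t ≥ (0:ℝ), HasDerivAt u (u' t) t)
    (hc_cont : ContinuousOn c (Set.Ici 0))
    (ha_cont : ContinuousOn a (Set.Ici 0)) (ha_nonneg : ∀ t ≥ (0:ℝ), 0 ≤ a t)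
    (h : ∀ t ≥ (0:ℝ), u' t ≤ c t * u t + a t * u t ^ α) :
    ∀ t ≥ (0:ℝ),
      u t ≤ (u 0 ^ (1 - α) * Real.exp ((1 - α) * ∫ s in (0:ℝ)..t, c s)
          + ∫ s in (0:ℝ)..t, (1 - α) * a s * Real.exp ((1 - α) * ∫ r in s..t, c r))
        ^ (1 / (1 - α)) := by
  intro T hT
  obtain ⟨c', hc', hcc'⟩ := hc_cont.exists_continuous_eqOn_Ici
  obtain ⟨a', ha', haa'⟩ := ha_cont.exists_continuous_eqOn_Ici
  have hc_eq : EqOn c c' (Icc 0 T) := hcc'.mono Icc_subset_Ici_self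
  have ha_eq : EqOn a a' (Icc 0 T) := haa'.mono Icc_subset_Ici_self
  have := le_duhamel_rpow_of_bernoulli hα1 hT hc' ha'
    (fun t ht => ha_eq ht ▸ ha_nonneg t ht.1) (hu_nonneg 0 le_rfl)
    (fun t ht => hderiv t ht.1) fun t ht => by
      rw [← hc_eq (Ico_subset_Icc_self ht), ← ha_eq (Ico_subset_Icc_self ht)]
      exact h t ht.1
  rwa [← duhamel_congr hT hc_eq ha_eq] at this

theorem stmt_2 (u u' c a : ℝ → ℝ) (α : ℝ) (hα0 : 0 ≤ α) (hα1 : α < 1)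
    (hu_nonneg : ∀ t ≥ (0:ℝ), 0 ≤ u t)
    (hderiv : ∀ t ≥ (0:ℝ), HasDerivAt u (u' t) t)
    (hc_cont : ContinuousOn c (Set.Ici 0)) (hc_nonneg : ∀ t ≥ (0:ℝ), 0 ≤ c t)
    (ha_cont : ContinuousOn a (Set.Ici 0)) (ha_nonneg : ∀ t ≥ (0:ℝ), 0 ≤ a t)
    (h : ∀ t ≥ (0:ℝ), u' t ≤ c t * u t + a t * u t ^ α) :
    ∀ t ≥ (0:ℝ),
      u t ≤ (u 0 ^ (1 - α) * Real.exp ((1 - α) * ∫ s in (0:ℝ)..t, c s)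
          + ∫ s in (0:ℝ)..t, (1 - α) * a s * Real.exp ((1 - α) * ∫ r in s..t, c r))
        ^ (1 / (1 - α)) :=
  stmt_2_general u u' c a α hα1 hu_nonneg hderiv hc_cont ha_cont ha_nonneg h
end

section
/- Let u be a nonnegative differentiable function on [0,∞) satisfying u'(t) ≤ c(t)u(t) + a(t)u(t)^α + b(t)u(t)^β with 0 < α < β ≤ 1 and c, a, b continuous nonnegative. Then for all t ≥ 0, u'(t) ≤ (c(t)+b(t))u(t) + (a(t)+b(t))u(t)^α; consequently u(t) ≤ [u(0)^{1-α}·exp((1-α)∫₀ᵗ (c(s)+b(s))ds) + ∫₀ᵗ (1-α)(a(s)+b(s))·exp((1-α)∫ₛᵗ (c(r)+b(r))dr) ds]^{1/(1-α)}. -/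
/-!
Since `u ^ β ≤ u + u ^ α`, the term `b u ^ β` splits between the linear term and the `α`-power
term, which gives the first inequality. It is a Bernoulli inequality `u' ≤ K u + L u ^ α`, which
the substitution `w = u ^ (1 - α)` turns into the linear inequality
`w' ≤ (1 - α) K w + (1 - α) L`; Gronwall's bound for variable coefficients, obtained from the
integrating factor `exp (∫ₛᵀ C)`, then gives the second.
-/

open MeasureTheory intervalIntegral

open Set Real

theorem rpow_le_self_add_rpow {x α β : ℝ} (hx : 0 ≤ x) (hα : 0 ≤ α) (hαβ : α ≤ β) (hβ : β ≤ 1) :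
    x ^ β ≤ x + x ^ α := by
  rcases le_total x 1 with hx1 | hx1
  · linarith [rpow_le_rpow_of_exponent_ge' hx hx1 hα hαβ]
  · have hxβ : x ^ β ≤ x := by simpa using rpow_le_rpow_of_exponent_le hx1 hβ
    linarith [rpow_nonneg hx α]

theorem hasDerivAt_integral_left_of_continuousOn {f : ℝ → ℝ} {t₀ T s : ℝ}
    (hf : ContinuousOn f (Icc t₀ T)) (hs : s ∈ Ioo t₀ T) :
    HasDerivAt (fun x => ∫ r in x..T, f r) (-f s) s :=
  integral_hasDerivAt_left
    ((hf.mono (Icc_subset_Icc_left hs.1.le)).intervalIntegrable_of_Icc hs.2.le)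
    ((hf.mono Ioo_subset_Icc_self).stronglyMeasurableAtFilter isOpen_Ioo s hs)
    (hf.continuousAt (Icc_mem_nhds hs.1 hs.2))

theorem continuousOn_integral_left_of_continuousOn {f : ℝ → ℝ} {t₀ T : ℝ} (hT : t₀ ≤ T)
    (hf : ContinuousOn f (Icc t₀ T)) :
    ContinuousOn (fun x => ∫ r in x..T, f r) (Icc t₀ T) := by
  rw [← uIcc_of_le hT] at hf ⊢
  exact continuousOn_primitive_interval_left (hf.integrableOn_compact isCompact_uIcc)

theorem le_gronwall_integral_of_hasDerivAt_le {v v' C A : ℝ → ℝ} {t₀ T : ℝ} (hT : t₀ ≤ T)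
    (hv : ContinuousOn v (Icc t₀ T)) (hv' : ∀ s ∈ Ioo t₀ T, HasDerivAt v (v' s) s)
    (hC : ContinuousOn C (Icc t₀ T)) (hA : ContinuousOn A (Icc t₀ T))
    (hle : ∀ s ∈ Ioo t₀ T, v' s ≤ C s * v s + A s) :
    v T ≤ v t₀ * exp (∫ s in t₀..T, C s) + ∫ s in t₀..T, A s * exp (∫ r in s..T, C r) := by
  set E : ℝ → ℝ := fun s => exp (∫ r in s..T, C r)
  have hE : ContinuousOn E (Icc t₀ T) :=
    continuous_exp.comp_continuousOn (continuousOn_integral_left_of_continuousOn hT hC)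
  have hAE : ContinuousOn (fun s => A s * E s) (Icc t₀ T) := hA.mul hE
  -- `h' = E * (v' - C v - A) ≤ 0`, while `h T = v T` and `h t₀` is the claimed bound.
  set h : ℝ → ℝ := fun s => v s * E s + ∫ r in s..T, A r * E r
  have hh' : ∀ s ∈ Ioo t₀ T,
      HasDerivAt h (v' s * E s + v s * (E s * -C s) + -(A s * E s)) s := fun s hs =>
    ((hv' s hs).mul (hasDerivAt_integral_left_of_continuousOn hC hs).exp).add
      (hasDerivAt_integral_left_of_continuousOn hAE hs)
  have hanti : AntitoneOn h (Icc t₀ T) := by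
    refine antitoneOn_of_hasDerivWithinAt_nonpos (convex_Icc t₀ T)
      (f' := fun s => v' s * E s + v s * (E s * -C s) + -(A s * E s))
      ((hv.mul hE).add (continuousOn_integral_left_of_continuousOn hT hAE)) ?_ ?_
    · rw [interior_Icc]
      exact fun s hs => (hh' s hs).hasDerivWithinAt
    · rw [interior_Icc]
      intro s hs
      nlinarith [hle s hs, exp_pos (∫ r in s..T, C r)]
  have hhT : h T = v T := by simp [h, E]
  simpa [hhT, h, E] using hanti (left_mem_Icc.2 hT) (right_mem_Icc.2 hT) hT

theorem mul_rpow_sub_one_le_of_le {x y K L α : ℝ} (hx : 0 < x) (hα : α ≤ 1)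
    (h : y ≤ K * x + L * x ^ α) :
    y * (1 - α) * x ^ (1 - α - 1) ≤ (1 - α) * K * x ^ (1 - α) + (1 - α) * L := by
  have hx_mul : x * x ^ (1 - α - 1) = x ^ (1 - α) := by
    rw [mul_comm, ← rpow_add_one hx.ne']; ring_nf
  have hxα_mul : x ^ α * x ^ (1 - α - 1) = 1 := by
    rw [← rpow_add hx]; simp
  calc y * (1 - α) * x ^ (1 - α - 1)
      ≤ (K * x + L * x ^ α) * (1 - α) * x ^ (1 - α - 1) := by
        gcongr
    _ = (1 - α) * K * (x * x ^ (1 - α - 1)) + (1 - α) * L * (x ^ α * x ^ (1 - α - 1)) := by ring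
    _ = (1 - α) * K * x ^ (1 - α) + (1 - α) * L := by rw [hx_mul, hxα_mul, mul_one]

/-- As `u` may vanish, `u ^ (1 - α)` need not be differentiable: the linear inequality is
applied to `(u + ε) ^ (1 - α)`, and then `ε → 0`. -/
theorem rpow_le_of_hasDerivAt_le_bernoulli {u u' K L : ℝ → ℝ} {α t₀ T : ℝ} (hα₀ : 0 ≤ α)
    (hα₁ : α ≤ 1) (hT : t₀ ≤ T) (hu : ∀ s ∈ Icc t₀ T, 0 ≤ u s)
    (hu_cont : ContinuousOn u (Icc t₀ T)) (hu' : ∀ s ∈ Ioo t₀ T, HasDerivAt u (u' s) s)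
    (hK : ContinuousOn K (Icc t₀ T)) (hK₀ : ∀ s ∈ Ioo t₀ T, 0 ≤ K s)
    (hL : ContinuousOn L (Icc t₀ T)) (hL₀ : ∀ s ∈ Ioo t₀ T, 0 ≤ L s)
    (hle : ∀ s ∈ Ioo t₀ T, u' s ≤ K s * u s + L s * u s ^ α) :
    u T ^ (1 - α) ≤ u t₀ ^ (1 - α) * exp ((1 - α) * ∫ s in t₀..T, K s)
      + ∫ s in t₀..T, (1 - α) * L s * exp ((1 - α) * ∫ r in s..T, K r) := by
  set E := exp ((1 - α) * ∫ s in t₀..T, K s)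
  set I := ∫ s in t₀..T, (1 - α) * L s * exp ((1 - α) * ∫ r in s..T, K r)
  have hT_mem : T ∈ Icc t₀ T := right_mem_Icc.2 hT
  have hε_bound : ∀ ε ∈ Ioi (0 : ℝ), u T ^ (1 - α) ≤ (u t₀ + ε) ^ (1 - α) * E + I := by
    intro ε (hε : 0 < ε)
    have hpos : ∀ s ∈ Icc t₀ T, u s + ε ≠ 0 := fun s hs => by linarith [hu s hs]
    have hgronwall := le_gronwall_integral_of_hasDerivAt_le hT
      (v := fun s => (u s + ε) ^ (1 - α)) (v' := fun s => u' s * (1 - α) * (u s + ε) ^ (1 - α - 1))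
      (C := fun s => (1 - α) * K s) (A := fun s => (1 - α) * L s)
      ((hu_cont.add continuousOn_const).rpow_const fun s hs => Or.inl (hpos s hs))
      (fun s hs => ((hu' s hs).add_const ε).rpow_const (Or.inl (hpos s (Ioo_subset_Icc_self hs))))
      (continuousOn_const.mul hK) (continuousOn_const.mul hL) fun s hs => by
        have hus := hu s (Ioo_subset_Icc_self hs)
        have hKs := hK₀ s hs
        have hLs := hL₀ s hs
        refine mul_rpow_sub_one_le_of_le (by positivity) hα₁ ((hle s hs).trans ?_)
        gcongr <;> linarith
    simp only [intervalIntegral.integral_const_mul] at hgronwall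
    calc u T ^ (1 - α) ≤ (u T + ε) ^ (1 - α) :=
          rpow_le_rpow (hu T hT_mem) (by linarith) (by linarith)
      _ ≤ _ := hgronwall
  have hcont : ContinuousAt (fun ε => (u t₀ + ε) ^ (1 - α) * E + I) 0 :=
    (((continuousAt_const.add continuousAt_id).rpow_const (Or.inr (by linarith))).mul
      continuousAt_const).add continuousAt_const
  simpa using ge_of_tendsto (hcont.tendsto.mono_left nhdsWithin_le_nhds)
    (eventually_nhdsWithin_of_forall hε_bound)

theorem stmt_3 (u u' c a b : ℝ → ℝ) (α β : ℝ) (hα : 0 < α) (hαβ : α < β) (hβ : β ≤ 1)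
    (hu_nonneg : ∀ t ≥ (0:ℝ), 0 ≤ u t)
    (hderiv : ∀ t ≥ (0:ℝ), HasDerivAt u (u' t) t)
    (hc_cont : ContinuousOn c (Set.Ici 0)) (hc_nonneg : ∀ t ≥ (0:ℝ), 0 ≤ c t)
    (ha_cont : ContinuousOn a (Set.Ici 0)) (ha_nonneg : ∀ t ≥ (0:ℝ), 0 ≤ a t)
    (hb_cont : ContinuousOn b (Set.Ici 0)) (hb_nonneg : ∀ t ≥ (0:ℝ), 0 ≤ b t)
    (h : ∀ t ≥ (0:ℝ), u' t ≤ c t * u t + a t * u t ^ α + b t * u t ^ β) :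
    (∀ t ≥ (0:ℝ), u' t ≤ (c t + b t) * u t + (a t + b t) * u t ^ α) ∧
      ∀ t ≥ (0:ℝ),
        u t ≤ (u 0 ^ (1 - α) * Real.exp ((1 - α) * ∫ s in (0:ℝ)..t, (c s + b s))
            + ∫ s in (0:ℝ)..t, (1 - α) * (a s + b s)
                * Real.exp ((1 - α) * ∫ r in s..t, (c r + b r)))
          ^ (1 / (1 - α)) := by
  have hα₁ : α < 1 := hαβ.trans_le hβ
  have hderiv_le : ∀ t ≥ (0:ℝ), u' t ≤ (c t + b t) * u t + (a t + b t) * u t ^ α := by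
    intro t ht
    have hb_pow := mul_le_mul_of_nonneg_left
      (rpow_le_self_add_rpow (hu_nonneg t ht) hα.le hαβ.le hβ) (hb_nonneg t ht)
    linarith [h t ht]
  refine ⟨hderiv_le, fun T hT => ?_⟩
  have hbernoulli := rpow_le_of_hasDerivAt_le_bernoulli
    (K := fun s => c s + b s) (L := fun s => a s + b s) hα.le hα₁.le hT
    (fun s hs => hu_nonneg s hs.1) (fun s hs => (hderiv s hs.1).continuousAt.continuousWithinAt)
    (fun s hs => hderiv s hs.1.le) ((hc_cont.add hb_cont).mono Icc_subset_Ici_self)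
    (fun s hs => add_nonneg (hc_nonneg s hs.1.le) (hb_nonneg s hs.1.le))
    ((ha_cont.add hb_cont).mono Icc_subset_Ici_self)
    (fun s hs => add_nonneg (ha_nonneg s hs.1.le) (hb_nonneg s hs.1.le))
    (fun s hs => hderiv_le s hs.1.le)
  rw [one_div, le_rpow_inv_iff_of_pos (hu_nonneg T hT)
    ((rpow_nonneg (hu_nonneg T hT) _).trans hbernoulli) (by linarith)]
  exact hbernoulli
end

section
/- With V₁(Y) = (1/B)Σᵢ |y^i − ȳ|² and F(Y) the ALDI drift F(Y)_i = −Cov(Y)·P·(y^i − y*) + ((D+1)/B)(y^i − ȳ), where Cov(Y) = (1/B)Σᵢ (y^i−ȳ)(y^i−ȳ)ᵀ and P is symmetric positive semidefinite, one has ∇V₁(Y)·F(Y) ≤ (2(D+1)/B)·V₁(Y). -/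
/-!
The deviations `v i = y i - ybar` sum to zero, so the `ystar` part of the drift contributes
nothing. With the scatter matrix `S = ∑ v i v iᵀ = B • Cov`, the remaining interaction term is
`-(2 / B²) ∑ v iᵀ S P v i = -(2 / B²) tr (S P S) ≤ 0`, since `S P S` is positive semidefinite.
The diffusion term contributes exactly `(2 (D + 1) / B) V₁`.
-/

open Finset Matrix

theorem sum_sub_average_eq_zero {ι E : Type*} [Fintype ι] [AddCommGroup E] [Module ℝ E]
    (y : ι → E) :
    ∑ i, (y i - (1 / (Fintype.card ι : ℝ)) • ∑ k, y k) = 0 := by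
  rcases isEmpty_or_nonempty ι with _ | _
  · simp
  · rw [sum_sub_distrib, sum_const, card_univ, ← Nat.cast_smul_eq_nsmul ℝ, smul_smul,
      mul_one_div_cancel (Nat.cast_ne_zero.mpr Fintype.card_ne_zero), one_smul, sub_self]

section Scatter

variable {ι n : Type*} [Fintype ι] [Fintype n]

theorem sum_dotProduct_mulVec_self_eq_trace (v : ι → n → ℝ) (M : Matrix n n ℝ) :
    ∑ i, v i ⬝ᵥ M *ᵥ v i = trace (M * ∑ i, vecMulVec (v i) (v i)) := by
  simp only [Matrix.mul_sum, trace_sum, mul_vecMulVec, trace_vecMulVec, dotProduct_comm]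

theorem sum_dotProduct_mul_mulVec_self_nonneg (v : ι → n → ℝ) {P : Matrix n n ℝ}
    (hP : P.PosSemidef) :
    0 ≤ ∑ i, v i ⬝ᵥ (∑ k, vecMulVec (v k) (v k)) *ᵥ P *ᵥ v i := by
  set S := ∑ k, vecMulVec (v k) (v k)
  have hS : Sᴴ = S := by
    simp only [S, conjTranspose_sum, conjTranspose_vecMulVec, star_trivial]
  simp_rw [mulVec_mulVec]
  rw [sum_dotProduct_mulVec_self_eq_trace]
  simpa only [hS] using (hP.mul_mul_conjTranspose_same S).trace_nonneg

theorem sum_dotProduct_smul_mulVec_add_nonneg (v : ι → n → ℝ) (hv : ∑ i, v i = 0)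
    {c : ℝ} (hc : 0 ≤ c) {P : Matrix n n ℝ} (hP : P.PosSemidef) (w : n → ℝ) :
    0 ≤ ∑ i, v i ⬝ᵥ (c • ∑ k, vecMulVec (v k) (v k)) *ᵥ P *ᵥ (v i + w) := by
  have hw : ∑ i, v i ⬝ᵥ (c • ∑ k, vecMulVec (v k) (v k)) *ᵥ P *ᵥ w = 0 := by
    rw [← sum_dotProduct, hv, zero_dotProduct]
  simp only [mulVec_add, dotProduct_add, sum_add_distrib]
  rw [hw, add_zero]
  simp only [smul_mulVec, dotProduct_smul, smul_eq_mul, ← mul_sum]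
  exact mul_nonneg hc (sum_dotProduct_mul_mulVec_self_nonneg v hP)

end Scatter

theorem stmt_14_general (D B : ℕ) (y : Fin B → Fin D → ℝ) (ystar : Fin D → ℝ)
    (P : Matrix (Fin D) (Fin D) ℝ) (hP : P.PosSemidef)
    (ybar : Fin D → ℝ) (hybar : ybar = fun j => (1 / (B : ℝ)) * ∑ k, y k j)
    (Cov : Matrix (Fin D) (Fin D) ℝ)
    (hCov : Cov = Matrix.of fun i j =>
      (1 / (B : ℝ)) * ∑ k, (y k i - ybar i) * (y k j - ybar j))
    (F : Fin B → Fin D → ℝ)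
    (hF : F = fun i =>
      -Cov.mulVec (P.mulVec (y i - ystar)) + (((D : ℝ) + 1) / B) • (y i - ybar)) :
    ∑ i, ((2 / (B : ℝ)) • (y i - ybar)) ⬝ᵥ F i
      ≤ (2 * ((D : ℝ) + 1) / B) * ((1 / (B : ℝ)) * ∑ i, ∑ j, (y i j - ybar j) ^ 2) := by
  set v := fun i => y i - ybar
  have hv : ∑ i, v i = 0 := by
    have hybar' : ybar = (1 / (Fintype.card (Fin B) : ℝ)) • ∑ k, y k := by
      ext j; simp [hybar, Finset.sum_apply]
    show ∑ i, (y i - ybar) = 0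
    rw [hybar']
    exact sum_sub_average_eq_zero y
  have hCov' : Cov = (1 / (B : ℝ)) • ∑ k, vecMulVec (v k) (v k) := by
    ext a b; simp [hCov, v, Matrix.sum_apply, vecMulVec_apply]
  have hinteraction : 0 ≤ ∑ i, v i ⬝ᵥ Cov *ᵥ P *ᵥ (v i + (ybar - ystar)) := by
    rw [hCov']
    exact sum_dotProduct_smul_mulVec_add_nonneg v hv (by positivity) hP (ybar - ystar)
  have hdrift : ∀ i, y i - ystar = v i + (ybar - ystar) := fun i => by simp [v]
  have hsq : ∑ i, ∑ j, (y i j - ybar j) ^ 2 = ∑ i, v i ⬝ᵥ v i := by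
    simp [v, dotProduct, sq]
  subst hF
  simp only [hdrift, hsq, dotProduct_add, dotProduct_neg, smul_dotProduct,
    dotProduct_smul, smul_eq_mul, sum_add_distrib, sum_neg_distrib, ← mul_sum]
  rw [show 2 * ((D : ℝ) + 1) / B * (1 / B * ∑ i, v i ⬝ᵥ v i)
      = ((D : ℝ) + 1) / B * (2 / B * ∑ i, v i ⬝ᵥ v i) by ring]
  have h2B : 0 ≤ 2 / (B : ℝ) := by positivity
  linarith [mul_nonneg h2B hinteraction]

theorem stmt_14 (D B : ℕ) (hB : 0 < B) (y : Fin B → Fin D → ℝ) (ystar : Fin D → ℝ)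
    (P : Matrix (Fin D) (Fin D) ℝ) (hP : P.PosSemidef)
    (ybar : Fin D → ℝ) (hybar : ybar = fun j => (1 / (B : ℝ)) * ∑ k, y k j)
    (Cov : Matrix (Fin D) (Fin D) ℝ)
    (hCov : Cov = Matrix.of fun i j =>
      (1 / (B : ℝ)) * ∑ k, (y k i - ybar i) * (y k j - ybar j))
    (F : Fin B → Fin D → ℝ)
    (hF : F = fun i =>
      -Cov.mulVec (P.mulVec (y i - ystar)) + (((D : ℝ) + 1) / B) • (y i - ybar)) :
    ∑ i, ((2 / (B : ℝ)) • (y i - ybar)) ⬝ᵥ F i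
      ≤ (2 * ((D : ℝ) + 1) / B) * ((1 / (B : ℝ)) * ∑ i, ∑ j, (y i j - ybar j) ^ 2) :=
  stmt_14_general D B y ystar P hP ybar hybar Cov hCov F hF
end
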